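/- arXiv:math/0602143 — 4 statements merged into one kernel-verified Lean document; each statement's English description precedes it below -/
import Mathlib

section
/- Let C be a downset in N^m under the product order (i.e., if y ∈ C and x_i ≤ y_i for all i ∈ [m], then x ∈ C). Then there exists a polynomial p and an integer N such that for all n ≥ N, the number of vectors in C of weight n (where the weight of x is x_1 + x_2 + ⋯ + x_m) equals p(n). -/
/-!
Slice a downset `C ⊆ ℕ^(m+1)` by its first coordinate: the slices `C_k ⊆ ℕ^m` are downsets,
decreasing in `k`, so by Dickson's lemma they are constant from some `K` on. The number of
vectors of weight `n` in `C` is `∑_{k ≤ n} c_{C_k}(n - k)`; for `n ≥ K` this is a finite sum of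
shifts of the `c_{C_k}` with `k < K` plus a shifted partial sum of `c_{C_K}`. By induction on `m`
every `c_{C_k}` is eventually polynomial, and eventual polynomiality survives shifts, finite sums
and partial sums (Faulhaber).
-/

open Finset Filter Polynomial

theorem Antitone.stabilizes_of_isLowerSet {α : Type*} [Preorder α] [WellQuasiOrderedLE α]
    {s : ℕ → Set α} (hanti : Antitone s) (hs : ∀ k, IsLowerSet (s k)) :
    ∃ K, ∀ k, K ≤ k → s k = s K := by
  -- Otherwise pick indices `a 0 < a 1 < ⋯` and `x (a j) ∈ s (a j) \ s (a (j + 1))`; a pair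
  -- `x (a i) ≤ x (a j)` with `i < j` puts `x (a i)` into the lower set `s (a (i + 1))`.
  by_contra! hne
  have hdrop : ∀ K, ∃ k, K ≤ k ∧ ∃ x ∈ s K, x ∉ s k := fun K => by
    obtain ⟨k, hKk, hk⟩ := hne K
    exact ⟨k, hKk, Set.exists_of_ssubset ((hanti hKk).ssubset_of_ne hk)⟩
  choose next hnext x hx hxnext using hdrop
  set a : ℕ → ℕ := fun j => next^[j] 0
  have ha : Monotone a := monotone_nat_of_le_succ fun j => by
    simp only [a, Function.iterate_succ_apply']
    exact hnext _
  obtain ⟨i, j, hij, hle⟩ := wellQuasiOrdered_le fun j => x (a j)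
  have hxj : x (a j) ∈ s (a (i + 1)) := hanti (ha hij) (hx (a j))
  refine hxnext (a i) (hs _ hle ?_)
  simpa only [a, Function.iterate_succ_apply'] using hxj

theorem Polynomial.exists_eval_eq_sum_range (p : ℚ[X]) :
    ∃ q : ℚ[X], ∀ n : ℕ, ∑ k ∈ range n, p.eval (k : ℚ) = q.eval (n : ℚ) := by
  induction p using Polynomial.induction_on' with
  | add p q hp hq =>
    obtain ⟨P, hP⟩ := hp
    obtain ⟨Q, hQ⟩ := hq
    exact ⟨P + Q, fun n => by simp [sum_add_distrib, hP, hQ]⟩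
  | monomial d a =>
    refine ⟨C a * ∑ i ∈ range (d + 1),
      C (_root_.bernoulli i * (d + 1).choose i / (d + 1)) * X ^ (d + 1 - i), fun n => ?_⟩
    simp only [eval_monomial, ← mul_sum, sum_range_pow, eval_mul, eval_C, eval_finsetSum,
      eval_pow, eval_X]
    congr 1
    refine sum_congr rfl fun i _ => ?_
    ring

def EventuallyPolynomial (f : ℕ → ℚ) : Prop :=
  ∃ p : ℚ[X], f =ᶠ[atTop] fun n => p.eval (n : ℚ)

namespace EventuallyPolynomial

variable {f g : ℕ → ℚ}

theorem congr (hf : EventuallyPolynomial f) (h : f =ᶠ[atTop] g) : EventuallyPolynomial g :=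
  let ⟨p, hp⟩ := hf
  ⟨p, h.symm.trans hp⟩

theorem add (hf : EventuallyPolynomial f) (hg : EventuallyPolynomial g) :
    EventuallyPolynomial (f + g) := by
  obtain ⟨p, hp⟩ := hf
  obtain ⟨q, hq⟩ := hg
  exact ⟨p + q, (hp.add hq).trans (.of_eq (by ext; simp))⟩

theorem sum {ι : Type*} (s : Finset ι) {F : ι → ℕ → ℚ} (h : ∀ i ∈ s, EventuallyPolynomial (F i)) :
    EventuallyPolynomial (∑ i ∈ s, F i) := by
  classical
  induction s using Finset.induction with
  | empty => exact ⟨0, .of_eq (by ext; simp)⟩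
  | insert a s ha ih =>
    rw [sum_insert ha]
    exact (h a (mem_insert_self a s)).add (ih fun i hi => h i (mem_insert_of_mem hi))

theorem comp_add (hf : EventuallyPolynomial f) (k : ℕ) :
    EventuallyPolynomial fun n => f (n + k) := by
  obtain ⟨p, hp⟩ := hf
  refine ⟨p.comp (X + C (k : ℚ)), ?_⟩
  filter_upwards [(tendsto_add_atTop_nat k).eventually hp] with n hn
  simp [hn]

theorem comp_sub (hf : EventuallyPolynomial f) (k : ℕ) :
    EventuallyPolynomial fun n => f (n - k) := by
  obtain ⟨p, hp⟩ := hf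
  refine ⟨p.comp (X - C (k : ℚ)), ?_⟩
  filter_upwards [(tendsto_sub_atTop_nat k).eventually hp, eventually_ge_atTop k] with n hn hkn
  simp [hn, Nat.cast_sub hkn]

theorem sum_range (hf : EventuallyPolynomial f) :
    EventuallyPolynomial fun n => ∑ j ∈ range n, f j := by
  obtain ⟨p, hp⟩ := hf
  obtain ⟨N, hN⟩ := eventually_atTop.mp hp
  obtain ⟨q, hq⟩ := p.exists_eval_eq_sum_range
  -- the error terms `f j - p.eval j` vanish from `N` on, so their partial sums are eventually constant
  refine ⟨C (∑ j ∈ range N, (f j - p.eval (j : ℚ))) + q, ?_⟩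
  filter_upwards [eventually_ge_atTop N] with n hn
  have herr := eventually_constant_sum (u := fun j => f j - p.eval (j : ℚ))
    (fun j hj => sub_eq_zero.mpr (hN j hj)) hn
  rw [eval_add, eval_C, ← hq, ← herr, ← sum_add_distrib]
  simp

theorem convolution {F : ℕ → ℕ → ℚ} {K : ℕ} (hF : ∀ k, EventuallyPolynomial (F k))
    (hK : ∀ k, K ≤ k → F k = F K) :
    EventuallyPolynomial fun n => ∑ k ∈ range (n + 1), F k (n - k) := by
  have head : EventuallyPolynomial (∑ k ∈ range K, fun n => F k (n - k)) :=
    sum _ fun k _ => (hF k).comp_sub k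
  have tail : EventuallyPolynomial fun n => ∑ j ∈ range (n + 1 - K), F K j :=
    ((hF K).sum_range.comp_sub K).comp_add 1
  refine (head.add tail).congr ?_
  filter_upwards [eventually_ge_atTop K] with n hn
  have htail : ∑ k ∈ Ico K (n + 1), F k (n - k) = ∑ j ∈ range (n + 1 - K), F K j := by
    rw [sum_Ico_eq_sum_range, ← sum_range_reflect (F K)]
    refine sum_congr rfl fun i _ => ?_
    rw [hK _ (Nat.le_add_right K i)]
    congr 1
    omega
  rw [← sum_range_add_sum_Ico _ (by omega : K ≤ n + 1), htail]
  simp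

end EventuallyPolynomial

open Classical in
noncomputable def weightCount {m : ℕ} (C : Set (Fin m → ℕ)) (n : ℕ) : ℕ :=
  #{x ∈ Nat.antidiagonalTuple m n | x ∈ C}

theorem natCard_eq_weightCount {m : ℕ} (C : Set (Fin m → ℕ)) (n : ℕ) :
    Nat.card {x : Fin m → ℕ | x ∈ C ∧ ∑ i, x i = n} = weightCount C n := by
  classical
  rw [weightCount, ← Nat.card_eq_finsetCard]
  congr
  ext x
  simp [Nat.mem_antidiagonalTuple, and_comm]

theorem weightCount_zero_succ (C : Set (Fin 0 → ℕ)) (n : ℕ) : weightCount C (n + 1) = 0 := by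
  simp [weightCount, Nat.antidiagonalTuple_zero_succ]

def consSlice {m : ℕ} (C : Set (Fin (m + 1) → ℕ)) (k : ℕ) : Set (Fin m → ℕ) :=
  {x | Fin.cons k x ∈ C}

theorem weightCount_succ {m : ℕ} (C : Set (Fin (m + 1) → ℕ)) (n : ℕ) :
    weightCount C n = ∑ k ∈ range (n + 1), weightCount (consSlice C k) (n - k) := by
  classical
  have hfirst : Set.MapsTo (fun x : Fin (m + 1) → ℕ => x 0)
      ↑{x ∈ Nat.antidiagonalTuple (m + 1) n | x ∈ C} ↑(range (n + 1)) := fun x hx => by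
    simp only [coe_filter, Nat.mem_antidiagonalTuple, Fin.sum_univ_succ, Set.mem_ofPred_eq] at hx
    simp only [coe_range, Set.mem_Iio]
    omega
  rw [weightCount, card_eq_sum_card_fiberwise hfirst]
  refine sum_congr rfl fun k hk => ?_
  rw [weightCount, filter_filter]
  simp only [mem_range] at hk
  refine card_nbij' Fin.tail (fun y => Fin.cons k y) ?_ ?_ ?_ ?_
  · intro x hx
    simp only [mem_coe, mem_filter, Nat.mem_antidiagonalTuple, Fin.sum_univ_succ] at hx
    obtain ⟨hsum, hC, rfl⟩ := hx
    simp only [mem_coe, mem_filter, Nat.mem_antidiagonalTuple]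
    exact ⟨by simp only [Fin.tail]; omega, by simpa [consSlice] using hC⟩
  · intro y hy
    simp only [mem_coe, mem_filter, Nat.mem_antidiagonalTuple] at hy ⊢
    simp only [Fin.sum_univ_succ, Fin.cons_zero, Fin.cons_succ]
    exact ⟨by omega, hy.2, trivial⟩
  · intro x hx
    simp only [mem_coe, mem_filter] at hx
    simp [← hx.2.2]
  · intro y _
    simp

theorem IsLowerSet.consSlice {m : ℕ} {C : Set (Fin (m + 1) → ℕ)} (hC : IsLowerSet C) (k : ℕ) :
    IsLowerSet (_root_.consSlice C k) :=
  hC.preimage (f := fun x => Fin.cons k x) fun _ _ hxy => Fin.cons_le_cons.mpr ⟨le_rfl, hxy⟩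

theorem IsLowerSet.antitone_consSlice {m : ℕ} {C : Set (Fin (m + 1) → ℕ)} (hC : IsLowerSet C) :
    Antitone (_root_.consSlice C) :=
  fun _ _ hjk _ hx => hC (Fin.cons_le_cons.mpr ⟨hjk, le_rfl⟩) hx

theorem IsLowerSet.eventuallyPolynomial_weightCount :
    ∀ {m : ℕ} {C : Set (Fin m → ℕ)}, IsLowerSet C →
      EventuallyPolynomial fun n => (weightCount C n : ℚ)
  | 0, C, _ => ⟨0, (eventually_ge_atTop 1).mono fun n hn => by
      obtain ⟨n, rfl⟩ := Nat.exists_eq_add_of_le' hn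
      simp [weightCount_zero_succ]⟩
  | m + 1, C, hC => by
    obtain ⟨K, hK⟩ := hC.antitone_consSlice.stabilizes_of_isLowerSet hC.consSlice
    have hslices := fun k => (hC.consSlice k).eventuallyPolynomial_weightCount
    refine (EventuallyPolynomial.convolution hslices (K := K) fun k hk => ?_).congr ?_
    · simp only [hK k hk]
    · exact .of_eq (by ext n; simp [weightCount_succ C n])

/-- **Theorem (Stanley).** If `C` is a downset in `ℕ^m` under the product order, then for all
sufficiently large `n` the number of vectors in `C` of weight `n` is given by a polynomial. -/
theorem downset_weight_eventually_polynomial (m : ℕ) (C : Set (Fin m → ℕ))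
    (hC : ∀ x y : Fin m → ℕ, y ∈ C → x ≤ y → x ∈ C) :
    ∃ (p : Polynomial ℚ) (N : ℕ), ∀ n : ℕ, N ≤ n →
      (Nat.card {x : Fin m → ℕ | x ∈ C ∧ ∑ i, x i = n} : ℚ) = p.eval (n : ℚ) := by
  have hlower : IsLowerSet C := fun y x hxy hy => hC x y hy hxy
  obtain ⟨p, hp⟩ := hlower.eventuallyPolynomial_weightCount
  obtain ⟨N, hN⟩ := eventually_atTop.mp hp
  exact ⟨p, N, fun n hn => by rw [natCard_eq_weightCount]; exact hN n hn⟩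
end

section
/- A permutation is skew-merged if and only if it avoids both 2143 and 3412; that is, the set of skew-merged permutations equals Av(2143, 3412). -/
/-- `σ ≤ π`: the permutation `π` contains the pattern `σ`, i.e. `π` has a subsequence
in the same relative order as `σ`. -/
def PermContains {k n : ℕ} (σ : Equiv.Perm (Fin k)) (π : Equiv.Perm (Fin n)) : Prop :=
  ∃ f : Fin k → Fin n, StrictMono f ∧ ∀ i j : Fin k, σ i < σ j ↔ π (f i) < π (f j)

/-- A permutation class: a set of permutations (of each length) closed downward
under the containment order. -/
def IsPermClass (C : ∀ n : ℕ, Set (Equiv.Perm (Fin n))) : Prop :=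
  ∀ (k n : ℕ) (σ : Equiv.Perm (Fin k)) (π : Equiv.Perm (Fin n)),
    π ∈ C n → PermContains σ π → σ ∈ C k
/-- A permutation is skew-merged if it is the union of an increasing subsequence and a
decreasing subsequence. -/
def SkewMerged {n : ℕ} (π : Equiv.Perm (Fin n)) : Prop :=
  ∃ A : Set (Fin n),
    (∀ i ∈ A, ∀ j ∈ A, i < j → π i < π j) ∧
    (∀ i ∉ A, ∀ j ∉ A, i < j → π j < π i)

/-- The permutation `2143` (0-indexed values `[1, 0, 3, 2]`). -/
def p2143 : Equiv.Perm (Fin 4) := Equiv.swap 0 1 * Equiv.swap 2 3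

/-- The permutation `3412` (0-indexed values `[2, 3, 0, 1]`). -/
def p3412 : Equiv.Perm (Fin 4) := Equiv.swap 0 2 * Equiv.swap 1 3

namespace SkewAux

variable {n : ℕ} {π : Equiv.Perm (Fin n)}

def Cmp (π : Equiv.Perm (Fin n)) (a b : Fin n) : Prop :=
  (a < b ∧ π a < π b) ∨ (b < a ∧ π b < π a)

def Inv (π : Equiv.Perm (Fin n)) (a b : Fin n) : Prop :=
  (a < b ∧ π b < π a) ∨ (b < a ∧ π a < π b)

lemma cmp_symm {a b : Fin n} (h : Cmp π a b) : Cmp π b a := h.elim Or.inr Or.inl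
lemma inv_symm {a b : Fin n} (h : Inv π a b) : Inv π b a := h.elim Or.inr Or.inl

lemma cmp_irrefl (z : Fin n) : ¬ Cmp π z z := by
  rintro (⟨h, _⟩ | ⟨h, _⟩) <;> exact lt_irrefl _ h

lemma cmp_ne {a b : Fin n} (h : Cmp π a b) : a ≠ b := by
  rintro rfl; exact cmp_irrefl a h

lemma cmp_or_inv {a b : Fin n} (h : a ≠ b) : Cmp π a b ∨ Inv π a b := by
  rcases lt_trichotomy a b with hl | hl | hl
  · rcases lt_trichotomy (π a) (π b) with hv | hv | hv
    · exact Or.inl (Or.inl ⟨hl, hv⟩)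
    · exact absurd (π.injective hv) h
    · exact Or.inr (Or.inl ⟨hl, hv⟩)
  · exact absurd hl h
  · rcases lt_trichotomy (π b) (π a) with hv | hv | hv
    · exact Or.inl (Or.inr ⟨hl, hv⟩)
    · exact absurd (π.injective hv) h.symm
    · exact Or.inr (Or.inr ⟨hl, hv⟩)

lemma not_cmp_of_inv {a b : Fin n} (h : Inv π a b) : ¬ Cmp π a b := by
  rcases h with ⟨h1, h2⟩ | ⟨h1, h2⟩ <;> rintro (⟨g1, g2⟩ | ⟨g1, g2⟩) <;>
    first | exact absurd h1 (lt_asymm g1) | exact absurd h2 (lt_asymm g2)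

lemma inv_of_not_cmp {a b : Fin n} (hne : a ≠ b) (h : ¬ Cmp π a b) : Inv π a b :=
  (cmp_or_inv hne).resolve_left h

lemma cmp_of_not_inv {a b : Fin n} (hne : a ≠ b) (h : ¬ Inv π a b) : Cmp π a b :=
  (cmp_or_inv hne).resolve_right h

lemma cmp_lt {a b : Fin n} (h : Cmp π a b) (hab : a < b) : π a < π b := by
  rcases h with ⟨_, h2⟩ | ⟨h1, _⟩
  · exact h2
  · exact absurd hab (lt_asymm h1)

section
variable (π)

open Classical in
noncomputable def deg (S : Finset (Fin n)) (z : Fin n) : ℕ :=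
  (S.filter (fun w => Cmp π z w)).card

open Classical in
noncomputable def En (S : Finset (Fin n)) : ℕ := ∑ w ∈ S, deg π S w

end

open Classical in
lemma En_insert (C : Finset (Fin n)) (z : Fin n) (hz : z ∉ C) :
    En π (insert z C) = En π C + 2 * deg π C z := by
  classical
  rw [En, Finset.sum_insert hz]
  have h1 : deg π (insert z C) z = deg π C z := by
    rw [deg, deg, Finset.filter_insert, if_neg (cmp_irrefl z)]
  have h2 : ∀ w ∈ C, deg π (insert z C) w = deg π C w + (if Cmp π w z then 1 else 0) := by
    intro w hw
    rw [deg, deg, Finset.filter_insert]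
    by_cases h : Cmp π w z
    · rw [if_pos h,
        Finset.card_insert_of_notMem (fun hmem => hz (Finset.mem_of_mem_filter _ hmem)),
        if_pos h]
    · rw [if_neg h, if_neg h, Nat.add_zero]
  rw [Finset.sum_congr rfl h2, Finset.sum_add_distrib, Finset.sum_boole]
  have h3 : C.filter (fun w => Cmp π w z) = C.filter (fun w => Cmp π z w) :=
    Finset.filter_congr (fun w _ => ⟨cmp_symm, cmp_symm⟩)
  rw [h1]
  simp only [Nat.cast_id]
  rw [h3]
  rw [En, deg]
  ring

lemma contains2143_of (a b c d : Fin n)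
    (hab : a < b) (hbc : b < c) (hcd : c < d)
    (h1 : π b < π a) (h2 : π a < π d) (h3 : π d < π c) : PermContains p2143 π := by
  refine ⟨![a,b,c,d], ?_, ?_⟩
  · intro i j h
    fin_cases i <;> fin_cases j <;>
      first
      | exact absurd h (by decide)
      | exact hab | exact hbc | exact hcd
      | exact hab.trans hbc | exact hbc.trans hcd
      | exact (hab.trans hbc).trans hcd
  · intro i j
    fin_cases i <;> fin_cases j <;>
      first
      | exact iff_of_false (by decide) (lt_irrefl _)
      | exact iff_of_true (by decide) h1
      | exact iff_of_true (by decide) h2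
      | exact iff_of_true (by decide) h3
      | exact iff_of_true (by decide) (h2.trans h3)
      | exact iff_of_true (by decide) (h1.trans h2)
      | exact iff_of_true (by decide) (h1.trans (h2.trans h3))
      | exact iff_of_false (by decide) (lt_asymm h1)
      | exact iff_of_false (by decide) (lt_asymm h2)
      | exact iff_of_false (by decide) (lt_asymm h3)
      | exact iff_of_false (by decide) (lt_asymm (h2.trans h3))
      | exact iff_of_false (by decide) (lt_asymm (h1.trans h2))
      | exact iff_of_false (by decide) (lt_asymm (h1.trans (h2.trans h3)))

lemma contains3412_of (a b c d : Fin n)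
    (hab : a < b) (hbc : b < c) (hcd : c < d)
    (h1 : π c < π d) (h2 : π d < π a) (h3 : π a < π b) : PermContains p3412 π := by
  refine ⟨![a,b,c,d], ?_, ?_⟩
  · intro i j h
    fin_cases i <;> fin_cases j <;>
      first
      | exact absurd h (by decide)
      | exact hab | exact hbc | exact hcd
      | exact hab.trans hbc | exact hbc.trans hcd
      | exact (hab.trans hbc).trans hcd
  · intro i j
    fin_cases i <;> fin_cases j <;>
      first
      | exact iff_of_false (by decide) (lt_irrefl _)
      | exact iff_of_true (by decide) h1
      | exact iff_of_true (by decide) h2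
      | exact iff_of_true (by decide) h3
      | exact iff_of_true (by decide) (h1.trans h2)
      | exact iff_of_true (by decide) (h2.trans h3)
      | exact iff_of_true (by decide) (h1.trans (h2.trans h3))
      | exact iff_of_false (by decide) (lt_asymm h1)
      | exact iff_of_false (by decide) (lt_asymm h2)
      | exact iff_of_false (by decide) (lt_asymm h3)
      | exact iff_of_false (by decide) (lt_asymm (h1.trans h2))
      | exact iff_of_false (by decide) (lt_asymm (h2.trans h3))
      | exact iff_of_false (by decide) (lt_asymm (h1.trans (h2.trans h3)))

/-- inversion graph 2K2 on blocks {a,b},{c,d} yields a 2143 pattern -/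
lemma conf2143 (a b c d : Fin n)
    (h1 : Inv π a b) (h2 : Inv π c d) (h3 : Cmp π a c) (h4 : Cmp π a d)
    (h5 : Cmp π b c) (h6 : Cmp π b d) : PermContains p2143 π := by
  rcases h1 with ⟨p1,q1⟩|⟨p1,q1⟩ <;> rcases h2 with ⟨p2,q2⟩|⟨p2,q2⟩ <;>
  rcases h3 with ⟨p3,q3⟩|⟨p3,q3⟩ <;> rcases h4 with ⟨p4,q4⟩|⟨p4,q4⟩ <;>
  rcases h5 with ⟨p5,q5⟩|⟨p5,q5⟩ <;> rcases h6 with ⟨p6,q6⟩|⟨p6,q6⟩ <;>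
  first
  | (apply contains2143_of (π := π) a b c d <;> assumption)
  | (apply contains2143_of (π := π) b a c d <;> assumption)
  | (apply contains2143_of (π := π) a b d c <;> assumption)
  | (apply contains2143_of (π := π) b a d c <;> assumption)
  | (apply contains2143_of (π := π) c d a b <;> assumption)
  | (apply contains2143_of (π := π) d c a b <;> assumption)
  | (apply contains2143_of (π := π) c d b a <;> assumption)
  | (apply contains2143_of (π := π) d c b a <;> assumption)
  | (exfalso; simp only [Fin.lt_def] at *; omega)

/-- inversion graph C4 (comparable blocks {a,b},{c,d}, all cross pairs inverted)
yields a 3412 pattern -/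
lemma conf3412 (a b c d : Fin n)
    (h1 : Cmp π a b) (h2 : Cmp π c d) (h3 : Inv π a c) (h4 : Inv π a d)
    (h5 : Inv π b c) (h6 : Inv π b d) : PermContains p3412 π := by
  rcases h1 with ⟨p1,q1⟩|⟨p1,q1⟩ <;> rcases h2 with ⟨p2,q2⟩|⟨p2,q2⟩ <;>
  rcases h3 with ⟨p3,q3⟩|⟨p3,q3⟩ <;> rcases h4 with ⟨p4,q4⟩|⟨p4,q4⟩ <;>
  rcases h5 with ⟨p5,q5⟩|⟨p5,q5⟩ <;> rcases h6 with ⟨p6,q6⟩|⟨p6,q6⟩ <;>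
  first
  | (apply contains3412_of (π := π) a b c d <;> assumption)
  | (apply contains3412_of (π := π) b a c d <;> assumption)
  | (apply contains3412_of (π := π) a b d c <;> assumption)
  | (apply contains3412_of (π := π) b a d c <;> assumption)
  | (apply contains3412_of (π := π) c d a b <;> assumption)
  | (apply contains3412_of (π := π) d c a b <;> assumption)
  | (apply contains3412_of (π := π) c d b a <;> assumption)
  | (apply contains3412_of (π := π) d c b a <;> assumption)
  | (exfalso; simp only [Fin.lt_def] at *; omega)

/-- no induced C5 in the ascent (comparability) graph -/
lemma noC5 (t v u w x : Fin n)
    (h1 : Cmp π t v) (h2 : Cmp π v u) (h3 : Cmp π u w) (h4 : Cmp π w x) (h5 : Cmp π x t)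
    (n1 : Inv π t u) (n2 : Inv π t w) (n3 : Inv π v w) (n4 : Inv π v x) (n5 : Inv π u x) :
    False := by
  simp only [Cmp, Inv, Fin.lt_def] at *
  omega


end SkewAux
open Classical in
lemma skewMerged_of_avoids {n : ℕ} {π : Equiv.Perm (Fin n)}
    (h2143 : ¬ PermContains p2143 π) (h3412 : ¬ PermContains p3412 π) : SkewMerged π := by
  classical
  set F : Finset (Finset (Fin n)) :=
    Finset.univ.filter (fun A => ∀ a ∈ A, ∀ b ∈ A, a < b → π a < π b) with hF
  have hFne : F.Nonempty := ⟨∅, by simp [hF]⟩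
  obtain ⟨A₀, hA₀F, hA₀max⟩ := F.exists_max_image Finset.card hFne
  have hF'ne : (F.filter (fun B => B.card = A₀.card)).Nonempty :=
    ⟨A₀, Finset.mem_filter.2 ⟨hA₀F, rfl⟩⟩
  obtain ⟨A, hAF', hAmin⟩ :=
    (F.filter (fun B => B.card = A₀.card)).exists_min_image (fun B => SkewAux.En π Bᶜ) hF'ne
  obtain ⟨hAF, hAcard⟩ := Finset.mem_filter.1 hAF'
  have hInc : ∀ a ∈ A, ∀ b ∈ A, a < b → π a < π b := (Finset.mem_filter.1 hAF).2
  -- maximality of the cardinality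
  have hmax : ∀ B : Finset (Fin n), (∀ a ∈ B, ∀ b ∈ B, a < b → π a < π b) →
      B.card ≤ A.card := by
    intro B hB
    rw [hAcard]
    exact hA₀max B (Finset.mem_filter.2 ⟨Finset.mem_univ _, hB⟩)
  -- minimality of En on the complement
  have hmin : ∀ B : Finset (Fin n), (∀ a ∈ B, ∀ b ∈ B, a < b → π a < π b) →
      B.card = A.card → SkewAux.En π Aᶜ ≤ SkewAux.En π Bᶜ := by
    intro B hB hBc
    exact hAmin B (Finset.mem_filter.2 ⟨Finset.mem_filter.2 ⟨Finset.mem_univ _, hB⟩,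
      by rw [hBc, hAcard]⟩)
  -- any two distinct elements of A are comparable
  have cmpA : ∀ x ∈ A, ∀ y ∈ A, x ≠ y → SkewAux.Cmp π x y := by
    intro x hx y hy hxy
    rcases lt_trichotomy x y with h | h | h
    · exact Or.inl ⟨h, hInc x hx y hy h⟩
    · exact absurd h hxy
    · exact Or.inr ⟨h, hInc y hy x hx h⟩
  -- every element outside A has an inversion partner inside A
  have hM : ∀ z ∉ A, ∃ x ∈ A, SkewAux.Inv π z x := by
    intro z hz
    by_contra hne
    push_neg at hne
    have hIncz : ∀ a ∈ insert z A, ∀ b ∈ insert z A, a < b → π a < π b := by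
      intro a ha b hb hab
      rcases Finset.mem_insert.1 ha with rfl | ha'
      · rcases Finset.mem_insert.1 hb with rfl | hb'
        · exact absurd hab (lt_irrefl _)
        · exact SkewAux.cmp_lt
            (SkewAux.cmp_of_not_inv (fun h => hz (h ▸ hb')) (hne b hb')) hab
      · rcases Finset.mem_insert.1 hb with rfl | hb'
        · exact SkewAux.cmp_lt
            (SkewAux.cmp_symm (SkewAux.cmp_of_not_inv (fun h => hz (h ▸ ha')) (hne a ha'))) hab
        · exact hInc a ha' b hb' hab
    have := hmax _ hIncz
    rw [Finset.card_insert_of_notMem hz] at this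
    omega
  -- lemma (a) : two outside comparable elements have at most one common inversion partner
  have lemA : ∀ p q, p ∉ A → q ∉ A → SkewAux.Cmp π p q →
      ∀ x ∈ A, ∀ y ∈ A, SkewAux.Inv π p x → SkewAux.Inv π q x →
        SkewAux.Inv π p y → SkewAux.Inv π q y → x = y := by
    intro p q hp hq hpq x hx y hy hpx hqx hpy hqy
    by_contra hxy
    exact h3412 (SkewAux.conf3412 p q x y hpq (cmpA x hx y hy hxy) hpx hpy hqx hqy)
  -- lemma (b) : inversion-partner sets are nested
  have lemB : ∀ p q, p ∉ A → q ∉ A → SkewAux.Cmp π p q →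
      (∀ x ∈ A, SkewAux.Inv π p x → SkewAux.Inv π q x) ∨
      (∀ x ∈ A, SkewAux.Inv π q x → SkewAux.Inv π p x) := by
    intro p q hp hq hpq
    by_contra hcon
    push_neg at hcon
    obtain ⟨⟨x, hx, hpx, hqx⟩, ⟨y, hy, hqy, hpy⟩⟩ := hcon
    have hxy : x ≠ y := fun h => hpy (h ▸ hpx)
    have hqx' : SkewAux.Cmp π x q :=
      SkewAux.cmp_symm (SkewAux.cmp_of_not_inv (Ne.symm (fun h : x = q => hq (h ▸ hx))) hqx)
    have hpy' : SkewAux.Cmp π p y :=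
      SkewAux.cmp_of_not_inv (Ne.symm (fun h : y = p => hp (h ▸ hy))) hpy
    exact h2143 (SkewAux.conf2143 p x q y hpx hqy hpq hpy' hqx' (cmpA x hx y hy hxy))
  -- main contradiction
  have main : ∀ p q, p ∉ A → q ∉ A → SkewAux.Cmp π p q →
      (∀ x ∈ A, SkewAux.Inv π q x → SkewAux.Inv π p x) → False := by
    intro p q hp hq hpq hsub
    obtain ⟨x, hxA, hqx⟩ := hM q hq
    have hpx : SkewAux.Inv π p x := hsub x hxA hqx
    have hMq : ∀ x' ∈ A, SkewAux.Inv π q x' → x' = x := by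
      intro x' hx' hqx'
      exact lemA p q hp hq hpq x' hx' x hxA (hsub _ hx' hqx') hqx' hpx hqx
    have hxq : x ≠ q := fun h => hq (h ▸ hxA)
    -- the swapped set
    have hqe : q ∉ A.erase x := fun h => hq (Finset.mem_of_mem_erase h)
    have hIncA' : ∀ a ∈ insert q (A.erase x), ∀ b ∈ insert q (A.erase x),
        a < b → π a < π b := by
      intro a ha b hb hab
      rcases Finset.mem_insert.1 ha with rfl | ha'
      · rcases Finset.mem_insert.1 hb with rfl | hb'
        · exact absurd hab (lt_irrefl _)
        · obtain ⟨hbx, hbA⟩ := Finset.mem_erase.1 hb'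
          have : ¬ SkewAux.Inv π a b := fun h => hbx (hMq b hbA h)
          exact SkewAux.cmp_lt (SkewAux.cmp_of_not_inv (fun h => hq (h ▸ hbA)) this) hab
      · rcases Finset.mem_insert.1 hb with rfl | hb'
        · obtain ⟨hax, haA⟩ := Finset.mem_erase.1 ha'
          have : ¬ SkewAux.Inv π b a := fun h => hax (hMq a haA h)
          exact SkewAux.cmp_lt
            (SkewAux.cmp_symm (SkewAux.cmp_of_not_inv (fun h => hq (h ▸ haA)) this)) hab
        · exact hInc a (Finset.mem_of_mem_erase ha') b (Finset.mem_of_mem_erase hb') hab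
    have hcardA' : (insert q (A.erase x)).card = A.card := by
      rw [Finset.card_insert_of_notMem hqe, Finset.card_erase_of_mem hxA]
      have : 1 ≤ A.card := Finset.card_pos.2 ⟨x, hxA⟩
      omega
    have hEn := hmin _ hIncA' hcardA'
    -- complements
    set C : Finset (Fin n) := Aᶜ.erase q with hC
    have hqC : q ∉ C := Finset.notMem_erase _ _
    have hxC : x ∉ C := fun h => (Finset.mem_compl.1 (Finset.mem_of_mem_erase h)) hxA
    have hAc : Aᶜ = insert q C := (Finset.insert_erase (Finset.mem_compl.2 hq)).symm
    have hA'c : (insert q (A.erase x))ᶜ = insert x C := by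
      ext w
      simp only [Finset.mem_compl, Finset.mem_insert, Finset.mem_erase, hC, not_or, not_and]
      constructor
      · rintro ⟨hwq, hw2⟩
        by_cases hwx : w = x
        · exact Or.inl hwx
        · exact Or.inr ⟨hwq, fun hwA => absurd hwA (hw2 hwx)⟩
      · rintro (rfl | ⟨hwq, hwA⟩)
        · exact ⟨hxq, fun h _ => absurd rfl h⟩
        · exact ⟨hwq, fun _ h => hwA h⟩
    rw [hAc, hA'c, SkewAux.En_insert C q hqC, SkewAux.En_insert C x hxC] at hEn
    have hdeg : SkewAux.deg π C q ≤ SkewAux.deg π C x := by omega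
    -- p is a Cmp-neighbour of q in C
    have hpq' : p ≠ q := SkewAux.cmp_ne hpq
    have hpC : p ∈ C := Finset.mem_erase.2 ⟨hpq', Finset.mem_compl.2 hp⟩
    have hpfil : p ∈ C.filter (fun w => SkewAux.Cmp π q w) :=
      Finset.mem_filter.2 ⟨hpC, SkewAux.cmp_symm hpq⟩
    have hxp' : ¬ SkewAux.Cmp π x p := SkewAux.not_cmp_of_inv (SkewAux.inv_symm hpx)
    -- find w
    have hw : ∃ w ∈ C, SkewAux.Cmp π x w ∧ ¬ SkewAux.Cmp π q w := by
      by_contra hno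
      push_neg at hno
      have hsub2 : C.filter (fun w => SkewAux.Cmp π x w) ⊆
          (C.filter (fun w => SkewAux.Cmp π q w)).erase p := by
        intro w hwmem
        obtain ⟨hwC, hwcmp⟩ := Finset.mem_filter.1 hwmem
        refine Finset.mem_erase.2 ⟨fun h => hxp' (h ▸ hwcmp), Finset.mem_filter.2
          ⟨hwC, hno w hwC hwcmp⟩⟩
      have h1 := Finset.card_le_card hsub2
      rw [Finset.card_erase_of_mem hpfil] at h1
      have h2 : 1 ≤ (C.filter (fun w => SkewAux.Cmp π q w)).card :=
        Finset.card_pos.2 ⟨p, hpfil⟩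
      simp only [SkewAux.deg] at hdeg
      omega
    obtain ⟨w, hwC, hxw, hqw⟩ := hw
    obtain ⟨hwq, hwAc⟩ := Finset.mem_erase.1 hwC
    have hwA : w ∉ A := Finset.mem_compl.1 hwAc
    have hqwInv : SkewAux.Inv π q w := SkewAux.inv_of_not_cmp (Ne.symm hwq) hqw
    have hwp : w ≠ p := fun h => hqw (h ▸ (SkewAux.cmp_symm hpq))
    by_cases hpw : SkewAux.Cmp π p w
    · -- C5 case
      rcases lemB p w hp hwA hpw with hsub3 | hsub3
      · exact SkewAux.not_cmp_of_inv (SkewAux.inv_symm (hsub3 x hxA hpx)) hxw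
      · obtain ⟨t, htA, hwt⟩ := hM w hwA
        have htp : SkewAux.Inv π p t := hsub3 t htA hwt
        have htx : t ≠ x := by
          rintro rfl
          exact SkewAux.not_cmp_of_inv (SkewAux.inv_symm hwt) hxw
        have hqt : SkewAux.Cmp π q t := by
          have : ¬ SkewAux.Inv π q t := fun h => htx (hMq t htA h)
          exact SkewAux.cmp_of_not_inv (Ne.symm (fun h : t = q => hq (h ▸ htA))) this
        have htxc : SkewAux.Cmp π t x := cmpA t htA x hxA htx
        exact SkewAux.noC5 t q p w x (SkewAux.cmp_symm hqt) (SkewAux.cmp_symm hpq) hpw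
          (SkewAux.cmp_symm hxw) (SkewAux.cmp_symm htxc)
          (SkewAux.inv_symm htp) (SkewAux.inv_symm hwt) hqwInv hqx hpx
    · -- 2K2 case
      have hpwInv : SkewAux.Inv π p w := SkewAux.inv_of_not_cmp (Ne.symm hwp) hpw
      exact h3412 (SkewAux.conf3412 p q x w hpq hxw hpx hpwInv hqx hqwInv)
  -- conclude
  refine ⟨(A : Set (Fin n)), ?_, ?_⟩
  · intro i hi j hj hij
    exact hInc i hi j hj hij
  · intro i hi j hj hij
    by_contra hlt
    push_neg at hlt
    have hne : i ≠ j := ne_of_lt hij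
    have hvne : π i ≠ π j := fun h => hne (π.injective h)
    have hcij : SkewAux.Cmp π i j := Or.inl ⟨hij, lt_of_le_of_ne hlt hvne⟩
    have hi' : i ∉ A := hi
    have hj' : j ∉ A := hj
    rcases lemB i j hi' hj' hcij with h | h
    · exact main j i hj' hi' (SkewAux.cmp_symm hcij) h
    · exact main i j hi' hj' hcij h
lemma skewMerged_of_permContains {k n : ℕ} {σ : Equiv.Perm (Fin k)} {π : Equiv.Perm (Fin n)}
    (h : PermContains σ π) (hs : SkewMerged π) : SkewMerged σ := by
  obtain ⟨f, hf, hiff⟩ := h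
  obtain ⟨A, hA, hB⟩ := hs
  refine ⟨f ⁻¹' A, ?_, ?_⟩
  · intro i hi j hj hij
    exact (hiff i j).2 (hA (f i) hi (f j) hj (hf hij))
  · intro i hi j hj hij
    exact (hiff j i).2 (hB (f i) hi (f j) hj (hf hij))

lemma not_skewMerged_p2143 : ¬ SkewMerged p2143 := by
  rintro ⟨A, hA, hB⟩
  by_cases h0 : (0:Fin 4) ∈ A <;> by_cases h1 : (1:Fin 4) ∈ A <;>
  by_cases h2 : (2:Fin 4) ∈ A <;> by_cases h3 : (3:Fin 4) ∈ A <;>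
  first
  | exact absurd (hA 0 h0 1 h1 (by decide)) (by decide)
  | exact absurd (hA 2 h2 3 h3 (by decide)) (by decide)
  | exact absurd (hB 0 h0 2 h2 (by decide)) (by decide)
  | exact absurd (hB 0 h0 3 h3 (by decide)) (by decide)
  | exact absurd (hB 1 h1 2 h2 (by decide)) (by decide)
  | exact absurd (hB 1 h1 3 h3 (by decide)) (by decide)

lemma not_skewMerged_p3412 : ¬ SkewMerged p3412 := by
  rintro ⟨A, hA, hB⟩
  by_cases h0 : (0:Fin 4) ∈ A <;> by_cases h1 : (1:Fin 4) ∈ A <;>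
  by_cases h2 : (2:Fin 4) ∈ A <;> by_cases h3 : (3:Fin 4) ∈ A <;>
  first
  | exact absurd (hA 0 h0 2 h2 (by decide)) (by decide)
  | exact absurd (hA 0 h0 3 h3 (by decide)) (by decide)
  | exact absurd (hA 1 h1 2 h2 (by decide)) (by decide)
  | exact absurd (hA 1 h1 3 h3 (by decide)) (by decide)
  | exact absurd (hB 0 h0 1 h1 (by decide)) (by decide)
  | exact absurd (hB 2 h2 3 h3 (by decide)) (by decide)


/-- **Theorem (Stankova; Kézdy–Snevily–Wang; Atkinson).** A permutation is skew-merged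
if and only if it avoids both `2143` and `3412`. -/
theorem skewMerged_iff_avoids_2143_3412 (n : ℕ) (π : Equiv.Perm (Fin n)) :
    SkewMerged π ↔ ¬ PermContains p2143 π ∧ ¬ PermContains p3412 π := by
  constructor
  · intro hsm
    exact ⟨fun hc => not_skewMerged_p2143 (skewMerged_of_permContains hc hsm),
      fun hc => not_skewMerged_p3412 (skewMerged_of_permContains hc hsm)⟩
  · rintro ⟨h1, h2⟩
    exact skewMerged_of_avoids h1 h2
end

section
/- Every permutation that can be covered by s monotonic rectangles is (2s−1)×(2s−1)-griddable, i.e., possesses an M-gridding for some (2s−1)×(2s−1) matrix M with entries in {0, 1, −1}. -/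
/-- The point `i` (with value `π i`) lies in the block of the gridding `(c, r)`
indexed by column `k` and row `l`. -/
def InBlock {n t u : ℕ} (π : Equiv.Perm (Fin n)) (c : Fin (t + 1) → ℕ) (r : Fin (u + 1) → ℕ)
    (k : Fin t) (l : Fin u) (i : Fin n) : Prop :=
  c k.castSucc ≤ (i : ℕ) ∧ (i : ℕ) < c k.succ ∧
    r l.castSucc ≤ (π i : ℕ) ∧ (π i : ℕ) < r l.succ

/-- `(c, r)` is an `M`-gridding of `π`: each block is increasing, decreasing or empty
according to the corresponding entry of the `t × u` matrix `M` (entries in {0, 1, -1},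
columns indexed by `Fin t`, rows by `Fin u`). -/
def IsGridding {n t u : ℕ} (M : Fin t → Fin u → SignType) (π : Equiv.Perm (Fin n))
    (c : Fin (t + 1) → ℕ) (r : Fin (u + 1) → ℕ) : Prop :=
  Monotone c ∧ Monotone r ∧ c 0 = 0 ∧ c (Fin.last t) = n ∧ r 0 = 0 ∧ r (Fin.last u) = n ∧
    ∀ (k : Fin t) (l : Fin u),
      (M k l = 1 → ∀ i j : Fin n,
        InBlock π c r k l i → InBlock π c r k l j → i < j → π i < π j) ∧
      (M k l = -1 → ∀ i j : Fin n,
        InBlock π c r k l i → InBlock π c r k l j → i < j → π j < π i) ∧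
      (M k l = 0 → ∀ i : Fin n, ¬ InBlock π c r k l i)

/-- `π ∈ Grid(M)`: the permutation `π` possesses an `M`-gridding. -/
def InGrid {n t u : ℕ} (M : Fin t → Fin u → SignType) (π : Equiv.Perm (Fin n)) : Prop :=
  ∃ c r, IsGridding M π c r


lemma sort_min' {t : ℕ} (v : Fin (t + 1) → ℕ) (j : Fin (t + 1)) :
    (v ∘ Tuple.sort v) 0 ≤ v j := by
  have hm := Tuple.monotone_sort v
  have : v j = (v ∘ Tuple.sort v) ((Tuple.sort v)⁻¹ j) := by simp
  rw [this]
  exact hm (Fin.zero_le _)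

lemma sort_max' {t : ℕ} (v : Fin (t + 1) → ℕ) (j : Fin (t + 1)) :
    v j ≤ (v ∘ Tuple.sort v) (Fin.last t) := by
  have hm := Tuple.monotone_sort v
  have : v j = (v ∘ Tuple.sort v) ((Tuple.sort v)⁻¹ j) := by simp
  rw [this]
  exact hm (Fin.le_last _)

lemma sort_boundary' {t : ℕ} (v : Fin (t + 1) → ℕ) (j : Fin (t + 1)) (k : Fin t) :
    v j ≤ (v ∘ Tuple.sort v) k.castSucc ∨ (v ∘ Tuple.sort v) k.succ ≤ v j := by
  have hm := Tuple.monotone_sort v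
  have hv : v j = (v ∘ Tuple.sort v) ((Tuple.sort v)⁻¹ j) := by simp
  rw [hv]
  rcases le_or_gt ((Tuple.sort v)⁻¹ j) k.castSucc with h | h
  · exact Or.inl (hm h)
  · exact Or.inr (hm (Fin.castSucc_lt_iff_succ_le.mp h))

def bvals {s n : ℕ} (hs : 0 < s) (u v : Fin s → Fin n) : Fin (2 * s - 1 + 1) → ℕ :=
  fun j => if h : (j : ℕ) < s then (u ⟨j, h⟩ : ℕ)
           else (v ⟨(j : ℕ) - s, by have := j.isLt; omega⟩ : ℕ) + 1

lemma bvals_left {s n : ℕ} (hs : 0 < s) (u v : Fin s → Fin n) (i : Fin s) :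
    ∃ j, bvals hs u v j = (u i : ℕ) := by
  refine ⟨⟨i, by have := i.isLt; omega⟩, ?_⟩
  simp [bvals, i.isLt]

lemma bvals_right {s n : ℕ} (hs : 0 < s) (u v : Fin s → Fin n) (i : Fin s) :
    ∃ j, bvals hs u v j = (v i : ℕ) + 1 := by
  have hlt : s + (i : ℕ) < 2 * s - 1 + 1 := by have := i.isLt; omega
  refine ⟨⟨s + (i : ℕ), hlt⟩, ?_⟩
  have hns : ¬ ((⟨s + (i : ℕ), hlt⟩ : Fin (2 * s - 1 + 1)) : ℕ) < s := by simp
  rw [bvals, dif_neg hns]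
  congr 1
  congr 1
  ext
  simp [Nat.add_sub_cancel_left]

lemma bvals_le {s n : ℕ} (hs : 0 < s) (u v : Fin s → Fin n) (j : Fin (2 * s - 1 + 1)) :
    bvals hs u v j ≤ n := by
  rw [bvals]
  split_ifs
  · exact le_of_lt (Fin.isLt _)
  · exact (Fin.isLt _)

lemma bvals_block {s n : ℕ} (hs : 0 < s) (u v : Fin s → Fin n)
    (k : Fin (2 * s - 1)) (i : Fin s) (p q : ℕ)
    (hup : (u i : ℕ) ≤ p) (hpv : p ≤ (v i : ℕ))
    (hp1 : (bvals hs u v ∘ Tuple.sort (bvals hs u v)) k.castSucc ≤ p)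
    (hp2 : p < (bvals hs u v ∘ Tuple.sort (bvals hs u v)) k.succ)
    (hq1 : (bvals hs u v ∘ Tuple.sort (bvals hs u v)) k.castSucc ≤ q)
    (hq2 : q < (bvals hs u v ∘ Tuple.sort (bvals hs u v)) k.succ) :
    (u i : ℕ) ≤ q ∧ q ≤ (v i : ℕ) := by
  obtain ⟨j1, hj1⟩ := bvals_left hs u v i
  obtain ⟨j2, hj2⟩ := bvals_right hs u v i
  have h1 := sort_boundary' (bvals hs u v) j1 k
  have h2 := sort_boundary' (bvals hs u v) j2 k
  rw [hj1] at h1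
  rw [hj2] at h2
  rcases h1 with h1 | h1 <;> rcases h2 with h2 | h2 <;> omega

/-- **Proposition.** Every permutation that may be covered by `s` monotonic rectangles is
`(2s-1) × (2s-1)`-griddable.  The rectangles are `[w i, x i] × [y i, z i]` (positions ×
values, possibly overlapping); each must meet the plot of `π` in a monotone subsequence,
and together they must cover all of `[n] × [n]`. -/
theorem covered_by_monotonic_rectangles_griddable (n s : ℕ) (π : Equiv.Perm (Fin n))
    (w x y z : Fin s → Fin n)
    (hmono : ∀ i : Fin s,
      (∀ a b : Fin n,
        (w i ≤ a ∧ a ≤ x i ∧ y i ≤ π a ∧ π a ≤ z i) →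
        (w i ≤ b ∧ b ≤ x i ∧ y i ≤ π b ∧ π b ≤ z i) → a < b → π a < π b) ∨
      (∀ a b : Fin n,
        (w i ≤ a ∧ a ≤ x i ∧ y i ≤ π a ∧ π a ≤ z i) →
        (w i ≤ b ∧ b ≤ x i ∧ y i ≤ π b ∧ π b ≤ z i) → a < b → π b < π a))
    (hcover : ∀ p q : Fin n, ∃ i : Fin s, w i ≤ p ∧ p ≤ x i ∧ y i ≤ q ∧ q ≤ z i) :
    ∃ M : Fin (2 * s - 1) → Fin (2 * s - 1) → SignType, InGrid M π := by
  classical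
  rcases Nat.eq_zero_or_pos n with hn | hn
  · subst hn
    refine ⟨fun _ _ => 0, fun _ => 0, fun _ => 0,
      monotone_const, monotone_const, rfl, rfl, rfl, rfl,
      fun k l => ⟨?_, ?_, fun _ i => i.elim0⟩⟩ <;>
    · intro h
      simp only [] at h
      exact absurd h (by decide)
  rcases Nat.eq_zero_or_pos s with hs | hs
  · obtain ⟨i, -⟩ := hcover ⟨0, hn⟩ ⟨0, hn⟩
    exact absurd i.isLt (by omega)
  set c : Fin (2 * s - 1 + 1) → ℕ := bvals hs w x ∘ Tuple.sort (bvals hs w x) with hcdef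
  set r : Fin (2 * s - 1 + 1) → ℕ := bvals hs y z ∘ Tuple.sort (bvals hs y z) with hrdef
  -- boundary endpoint facts
  have hc0 : c 0 = 0 := by
    obtain ⟨i, hw0, -, -, -⟩ := hcover ⟨0, hn⟩ ⟨0, hn⟩
    obtain ⟨j, hj⟩ := bvals_left hs w x i
    have h1 : c 0 ≤ (w i : ℕ) := hj ▸ sort_min' (bvals hs w x) j
    have h2 : (w i : ℕ) ≤ 0 := hw0
    omega
  have hclast : c (Fin.last (2 * s - 1)) = n := by
    obtain ⟨i, -, hx, -, -⟩ := hcover ⟨n - 1, by omega⟩ ⟨0, hn⟩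
    obtain ⟨j, hj⟩ := bvals_right hs w x i
    have h1 : (x i : ℕ) + 1 ≤ c (Fin.last (2 * s - 1)) := hj ▸ sort_max' (bvals hs w x) j
    have h2 : n - 1 ≤ (x i : ℕ) := hx
    have h3 := (x i).isLt
    have h4 : c (Fin.last (2 * s - 1)) ≤ n := bvals_le hs w x _
    omega
  have hr0 : r 0 = 0 := by
    obtain ⟨i, -, -, hy0, -⟩ := hcover ⟨0, hn⟩ ⟨0, hn⟩
    obtain ⟨j, hj⟩ := bvals_left hs y z i
    have h1 : r 0 ≤ (y i : ℕ) := hj ▸ sort_min' (bvals hs y z) j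
    have h2 : (y i : ℕ) ≤ 0 := hy0
    omega
  have hrlast : r (Fin.last (2 * s - 1)) = n := by
    obtain ⟨i, -, -, -, hz⟩ := hcover ⟨0, hn⟩ ⟨n - 1, by omega⟩
    obtain ⟨j, hj⟩ := bvals_right hs y z i
    have h1 : (z i : ℕ) + 1 ≤ r (Fin.last (2 * s - 1)) := hj ▸ sort_max' (bvals hs y z) j
    have h2 : n - 1 ≤ (z i : ℕ) := hz
    have h3 := (z i).isLt
    have h4 : r (Fin.last (2 * s - 1)) ≤ n := bvals_le hs y z _
    omega
  have key : ∀ (k l : Fin (2 * s - 1)) (i0 : Fin n), InBlock π c r k l i0 →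
      ∃ rc : Fin s, ∀ j : Fin n, InBlock π c r k l j →
        w rc ≤ j ∧ j ≤ x rc ∧ y rc ≤ π j ∧ π j ≤ z rc := by
    intro k l i0 hi0
    obtain ⟨rc, h1, h2, h3, h4⟩ := hcover i0 (π i0)
    refine ⟨rc, fun j hj => ?_⟩
    obtain ⟨ha, hb, hcc, hd⟩ := hj
    obtain ⟨ha0, hb0, hc0', hd0⟩ := hi0
    have HC := bvals_block hs w x k rc (i0 : ℕ) (j : ℕ)
      (Fin.le_def.mp h1) (Fin.le_def.mp h2) ha0 hb0 ha hb
    have HR := bvals_block hs y z l rc (π i0 : ℕ) (π j : ℕ)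
      (Fin.le_def.mp h3) (Fin.le_def.mp h4) hc0' hd0 hcc hd
    exact ⟨Fin.le_def.mpr HC.1, Fin.le_def.mpr HC.2,
      Fin.le_def.mpr HR.1, Fin.le_def.mpr HR.2⟩
  refine ⟨fun k l => if h : ∃ i : Fin n, InBlock π c r k l i then
      (if ∀ a b : Fin n, InBlock π c r k l a → InBlock π c r k l b → a < b → π a < π b
        then 1 else -1) else 0, c, r,
    Tuple.monotone_sort _, Tuple.monotone_sort _, hc0, hclast, hr0, hrlast,
    fun k l => ⟨?_, ?_, ?_⟩⟩
  · intro hM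
    simp only [] at hM
    by_cases h : ∃ i : Fin n, InBlock π c r k l i
    · rw [dif_pos h] at hM
      by_cases h2 : ∀ a b : Fin n, InBlock π c r k l a → InBlock π c r k l b →
          a < b → π a < π b
      · exact h2
      · rw [if_neg h2] at hM
        exact absurd hM (by decide)
    · rw [dif_neg h] at hM
      exact absurd hM (by decide)
  · intro hM
    simp only [] at hM
    by_cases h : ∃ i : Fin n, InBlock π c r k l i
    · by_cases h2 : ∀ a b : Fin n, InBlock π c r k l a → InBlock π c r k l b →
          a < b → π a < π b
      · rw [dif_pos h, if_pos h2] at hM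
        exact absurd hM (by decide)
      · obtain ⟨i0, hi0⟩ := h
        obtain ⟨rc, hrc⟩ := key k l i0 hi0
        rcases hmono rc with hinc | hdec
        · exact absurd (fun a b ha hb hab => hinc a b (hrc a ha) (hrc b hb) hab) h2
        · exact fun a b ha hb hab => hdec a b (hrc a ha) (hrc b hb) hab
    · rw [dif_neg h] at hM
      exact absurd hM (by decide)
  · intro hM
    simp only [] at hM
    by_cases h : ∃ i : Fin n, InBlock π c r k l i
    · rw [dif_pos h] at hM
      split_ifs at hM
    · exact fun i hi => h ⟨i, hi⟩
end

section
/- If a permutation class C contains arbitrarily long alternations (vertical or horizontal), then |C_n| ≥ 2^{n−1} for all n ≥ 1. -/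
/-- A vertical alternation: a permutation of even length `n = 2m` such that either every
value in an odd position is smaller than every value in an even position, or vice versa
(positions here are 0-indexed, so "odd positions" are those with index `≡ 0 mod 2`). -/
def IsVerticalAlternation {n : ℕ} (π : Equiv.Perm (Fin n)) : Prop :=
  (∃ m : ℕ, n = 2 * m) ∧
    ((∀ i j : Fin n, (i : ℕ) % 2 = 0 → (j : ℕ) % 2 = 1 → π i < π j) ∨
     (∀ i j : Fin n, (i : ℕ) % 2 = 0 → (j : ℕ) % 2 = 1 → π j < π i))

/-- The class `C` contains arbitrarily long alternations (vertical or horizontal, a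
horizontal alternation being the inverse of a vertical one). -/
def ContainsArbitrarilyLongAlternations (C : ∀ n : ℕ, Set (Equiv.Perm (Fin n))) : Prop :=
  ∀ m : ℕ, ∃ (n : ℕ) (π : Equiv.Perm (Fin n)), π ∈ C n ∧ m ≤ n ∧
    (IsVerticalAlternation π ∨ IsVerticalAlternation π⁻¹)

/-! An alternation of length `2(n+1)` splits into `n+1` consecutive position pairs, each
holding one "low" and one "high" value, with every low value below every high value.
Choosing from each pair either entry gives an occurrence of a pattern of length `n+1`.
Fix the pair `a` whose low value is largest and take the low entry there: the pattern then
remembers exactly which pairs contributed their high entry, namely those whose value exceeds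
the one at `a`. This gives `2^n` distinct patterns, all in the class. Horizontal alternations
reduce to vertical ones because containment commutes with inversion. -/

open Equiv

theorem exists_perm_lt_iff_lt {α : Type*} [LinearOrder α] {n : ℕ} {g : Fin n → α}
    (hg : Function.Injective g) : ∃ σ : Perm (Fin n), ∀ i j, σ i < σ j ↔ g i < g j := by
  have hmono : StrictMono (g ∘ Tuple.sort g) :=
    (Tuple.monotone_sort g).strictMono_of_injective (hg.comp (Tuple.sort g).injective)
  refine ⟨(Tuple.sort g)⁻¹, fun i j => ?_⟩
  simpa using (hmono.lt_iff_lt (a := (Tuple.sort g)⁻¹ i) (b := (Tuple.sort g)⁻¹ j)).symm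

theorem PermContains.inv {k n : ℕ} {σ : Perm (Fin k)} {π : Perm (Fin n)}
    (h : PermContains σ π) : PermContains σ⁻¹ π⁻¹ := by
  obtain ⟨f, hf, hσπ⟩ := h
  refine ⟨fun a => π (f (σ⁻¹ a)), fun a b hab => ?_, fun a b => ?_⟩
  · exact (hσπ _ _).mp (by simpa using hab)
  · simpa using hf.lt_iff_lt.symm

theorem card_patterns_inv {k n : ℕ} (π : Perm (Fin n)) :
    Nat.card {σ : Perm (Fin k) | PermContains σ π⁻¹} =
      Nat.card {σ : Perm (Fin k) | PermContains σ π} :=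
  Nat.card_congr <| (Equiv.inv _).subtypeEquiv fun σ =>
    ⟨fun h => by simpa using h.inv, PermContains.inv⟩

theorem IsPermClass.card_patterns_le {C : ∀ n : ℕ, Set (Perm (Fin n))} (hC : IsPermClass C)
    {N : ℕ} {π : Perm (Fin N)} (hπ : π ∈ C N) (k : ℕ) :
    Nat.card {σ : Perm (Fin k) | PermContains σ π} ≤ Nat.card (C k) :=
  Nat.card_mono (Set.toFinite _) fun σ hσ => hC k N σ π hπ hσ

/-- `p i false` and `p i true` are the low and the high entry of the `i`-th pair. -/
theorem two_pow_le_card_patterns_of_pairs {n N : ℕ} (π : Perm (Fin N))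
    (p : Fin (n + 1) → Bool → Fin N)
    (hp : ∀ i j b c, i < j → p i b < p j c) (hπp : ∀ i j, π (p i false) < π (p j true)) :
    2 ^ n ≤ Nat.card {σ : Perm (Fin (n + 1)) | PermContains σ π} := by
  classical
  obtain ⟨a, ha⟩ := Finite.exists_max fun i => π (p i false)
  let pos (A : Finset (Fin (n + 1))) (i : Fin (n + 1)) : Fin N := p i (decide (i ∈ A))
  have hpos (A) : StrictMono (pos A) := fun i j hij => hp i j _ _ hij
  choose pat hpat using fun A => exists_perm_lt_iff_lt (π.injective.comp (hpos A).injective)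
  have hrec (A) (haA : a ∉ A) (i) : pat A a < pat A i ↔ i ∈ A := by
    rw [hpat]
    by_cases hi : i ∈ A <;> simp [pos, hi, haA, ha i, hπp]
  have hinj : Set.InjOn pat (Finset.univ.erase a).powerset := by
    intro A hA B hB hAB
    have haA : a ∉ A := fun h => Finset.notMem_erase a _ (Finset.mem_powerset.mp hA h)
    have haB : a ∉ B := fun h => Finset.notMem_erase a _ (Finset.mem_powerset.mp hB h)
    ext i
    rw [← hrec A haA, ← hrec B haB, hAB]
  calc 2 ^ n = ((Finset.univ.erase a).powerset : Set (Finset (Fin (n + 1)))).ncard := by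
        rw [Set.ncard_coe_finset, Finset.card_powerset,
          Finset.card_erase_of_mem (Finset.mem_univ a), Finset.card_univ, Fintype.card_fin,
          Nat.add_sub_cancel]
    _ ≤ Nat.card {σ : Perm (Fin (n + 1)) | PermContains σ π} :=
      Set.ncard_le_ncard_of_injOn pat (fun A _ => ⟨pos A, hpos A, hpat A⟩) hinj

theorem IsVerticalAlternation.exists_low_parity {N : ℕ} {π : Perm (Fin N)}
    (hπ : IsVerticalAlternation π) :
    ∃ e : Bool, ∀ i j : Fin N, (i : ℕ) % 2 = e.toNat → (j : ℕ) % 2 ≠ e.toNat →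
      π i < π j := by
  rcases hπ.2 with h | h
  · exact ⟨false, fun i j hi hj => h i j hi (by simp at hj; omega)⟩
  · exact ⟨true, fun i j hi hj => h j i (by simp at hj; omega) hi⟩

theorem IsVerticalAlternation.two_pow_le_card_patterns {n N : ℕ} {π : Perm (Fin N)}
    (hπ : IsVerticalAlternation π) (hN : 2 * (n + 1) ≤ N) :
    2 ^ n ≤ Nat.card {σ : Perm (Fin (n + 1)) | PermContains σ π} := by
  obtain ⟨e, he⟩ := hπ.exists_low_parity
  refine two_pow_le_card_patterns_of_pairs π
    (fun i b => ⟨2 * i + (b ^^ e).toNat, by have := Bool.toNat_le (b ^^ e); omega⟩)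
    (fun i j b c hij => ?_) (fun i j => he _ _ (by cases e <;> simp) (by cases e <;> simp))
  have := Bool.toNat_le (b ^^ e)
  have := Bool.toNat_le (c ^^ e)
  simp only [Fin.mk_lt_mk]
  omega

/-- **Proposition.** If a permutation class contains arbitrarily long alternations
(vertical or horizontal), then `|C_n| ≥ 2^(n-1)` for all `n ≥ 1`. -/
theorem arbitrarily_long_alternations_not_small
    (C : ∀ n : ℕ, Set (Equiv.Perm (Fin n))) (hC : IsPermClass C)
    (halt : ContainsArbitrarilyLongAlternations C) :
    ∀ n : ℕ, 1 ≤ n → 2 ^ (n - 1) ≤ Nat.card (C n) := by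
  intro n hn
  obtain ⟨m, rfl⟩ : ∃ m, n = m + 1 := ⟨n - 1, by omega⟩
  obtain ⟨N, π, hπC, hN, hπ | hπ⟩ := halt (2 * (m + 1))
  · exact hπ.two_pow_le_card_patterns hN |>.trans (hC.card_patterns_le hπC _)
  · calc 2 ^ m ≤ Nat.card {σ : Perm (Fin (m + 1)) | PermContains σ π⁻¹} :=
          hπ.two_pow_le_card_patterns hN
      _ = Nat.card {σ : Perm (Fin (m + 1)) | PermContains σ π} := card_patterns_inv π
      _ ≤ Nat.card (C (m + 1)) := hC.card_patterns_le hπC _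
end
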